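/- Let γ ∈ (0,1), τ > ν+1, β ∈ ℝ and λ ≥ 1. Then the Lebesgue measure of the set of frequency vectors in DC(γ,τ) violating the first-order Melnikov conditions satisfies |DC(γ,τ) ∖ Ω_γ| ≤ C γ, where the constant C depends only on ν, τ and the wave vectors j̄₁,…,j̄_ν (in particular C is independent of γ, λ and β). -/

import Mathlib

open scoped ENNReal NNReal BigOperators Classical
open MeasureTheory

namespace BetaPlane

abbrev Zn (n : ℕ) := Fin n → ℤ
abbrev Z2 := Fin 2 → ℤ
abbrev Idx (ν : ℕ) := Zn ν × Z2

/-- Euclidean norm of an integer vector. -/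
noncomputable def znorm {n : ℕ} (ℓ : Fin n → ℤ) : ℝ :=
  Real.sqrt (∑ i, ((ℓ i : ℝ)) ^ 2)

/-- Euclidean norm of a real vector. -/
noncomputable def rnorm {n : ℕ} (ω : Fin n → ℝ) : ℝ :=
  Real.sqrt (∑ i, (ω i) ^ 2)

/-- `⟨ℓ,j⟩ := max {1, |ℓ|, |j|}`. -/
noncomputable def wt {ν : ℕ} (p : Idx ν) : ℝ := max 1 (max (znorm p.1) (znorm p.2))

/-- `⟨ℓ⟩ := max {1, |ℓ|}`. -/
noncomputable def bwt {n : ℕ} (ℓ : Fin n → ℤ) : ℝ := max 1 (znorm ℓ)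

noncomputable def ωdot {n : ℕ} (ω : Fin n → ℝ) (ℓ : Fin n → ℤ) : ℝ := ∑ i, ω i * (ℓ i : ℝ)

noncomputable def mdot (m : Fin 2 → ℝ) (j : Z2) : ℝ := ∑ k, m k * (j k : ℝ)

/-- `π^⊤(ℓ) = ∑ k, ℓ k • j̄ k`. -/
def piT {ν : ℕ} (jb : Fin ν → Z2) (ℓ : Zn ν) : Z2 := fun k => ∑ i, ℓ i * jb i k

/-- `π(ς) = (j̄ 1 · ς, …, j̄ ν · ς)`. -/
noncomputable def piMap {ν : ℕ} (jb : Fin ν → Z2) (ς : Fin 2 → ℝ) : Fin ν → ℝ :=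
  fun i => ∑ k, (jb i k : ℝ) * ς k

/-- The wave vectors `j̄ 1, …, j̄ ν` span `ℝ²`. -/
def SpanningWaveVectors {ν : ℕ} (jb : Fin ν → Z2) : Prop :=
  ∃ i i' : Fin ν, jb i 0 * jb i' 1 - jb i 1 * jb i' 0 ≠ 0

/-- Quasi-periodic traveling wave, in Fourier coefficients:
`û(ℓ,j) = 0` whenever `π^⊤(ℓ) + j ≠ 0`. -/
def IsQPTW {ν : ℕ} (jb : Fin ν → Z2) (u : Idx ν → ℂ) : Prop :=
  ∀ p : Idx ν, piT jb p.1 + p.2 ≠ 0 → u p = 0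

/-- Zero average in `x`: the Fourier coefficients `û(ℓ,0)` vanish. -/
def ZeroAvgX {ν : ℕ} (u : Idx ν → ℂ) : Prop := ∀ ℓ : Zn ν, u (ℓ, 0) = 0

/-- Real-valuedness in Fourier coefficients. -/
def RealCoeff {ν : ℕ} (u : Idx ν → ℂ) : Prop :=
  ∀ p : Idx ν, u (-p.1, -p.2) = starRingEnd ℂ (u p)

/-- Sobolev norm `‖u‖_s` (as an extended real). -/
noncomputable def sobNorm {ν : ℕ} {E : Type*} [SeminormedAddCommGroup E]
    (s : ℝ) (u : Idx ν → E) : ℝ≥0∞ :=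
  (∑' p : Idx ν, ENNReal.ofReal (wt p ^ (2 * s)) * ((‖u p‖₊ : ℝ≥0∞)) ^ 2) ^ (1/2 : ℝ)

/-- `C^∞` smoothness = rapid decay of the Fourier coefficients. -/
def SmoothCoeff {ν : ℕ} (u : Idx ν → ℂ) : Prop := ∀ s : ℝ, sobNorm s u < ⊤

/-- Weighted (Lipschitz in the parameter `ω ∈ Λ`) Sobolev norm `‖u‖_s^{Lip(γ)}`. -/
noncomputable def sobNormLip {ν : ℕ} {E : Type*} [SeminormedAddCommGroup E]
    (γ : ℝ) (Λ : Set (Fin ν → ℝ)) (s : ℝ) (u : (Fin ν → ℝ) → Idx ν → E) : ℝ≥0∞ :=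
  (⨆ ω ∈ Λ, sobNorm s (u ω)) +
    ENNReal.ofReal γ * ⨆ ω₁ ∈ Λ, ⨆ ω₂ ∈ Λ,
      sobNorm (s - 1) (fun p => u ω₁ p - u ω₂ p) / ENNReal.ofReal (rnorm (ω₁ - ω₂))

/-- Symbol of `𝙻 = (−Δ)^{−1} ∂_{x₁}`. -/
noncomputable def Lfreq (j : Z2) : ℝ := if j = 0 then 0 else (j 0 : ℝ) / (znorm j) ^ 2

/-- The operator `𝙻 = (−Δ)^{−1} ∂_{x₁}` in Fourier coefficients. -/
noncomputable def Lsymb {ν : ℕ} (v : Idx ν → ℂ) : Idx ν → ℂ :=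
  fun p => Complex.I * (Lfreq p.2 : ℂ) * v p

/-- The operator `ω·∂_φ` in Fourier coefficients. -/
noncomputable def phiDer {ν : ℕ} (ω : Fin ν → ℝ) (v : Idx ν → ℂ) : Idx ν → ℂ :=
  fun p => Complex.I * ((ωdot ω p.1 : ℝ) : ℂ) * v p

/-- `B(j') ⋅ (i j'')` where `B(j') = (i/|j'|²)(−j'₂, j'₁)` is the Biot-Savart symbol. -/
noncomputable def bsDot (j' j'' : Z2) : ℂ :=
  if j' = 0 then 0
  else -((((-(j' 1 : ℝ)) * (j'' 0 : ℝ) + (j' 0 : ℝ) * (j'' 1 : ℝ)) / (znorm j') ^ 2 : ℝ) : ℂ)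

/-- Fourier coefficients of the nonlinearity `B[v]·∇w` (`B` the Biot-Savart operator). -/
noncomputable def nonlin {ν : ℕ} (v w : Idx ν → ℂ) : Idx ν → ℂ :=
  fun p => ∑' q : Idx ν, bsDot q.2 (p.2 - q.2) * v q * w (p.1 - q.1, p.2 - q.2)

/-- Fourier coefficients of the (vector valued) Biot-Savart velocity field `B[v]`. -/
noncomputable def biotSavartV {ν : ℕ} (v : Idx ν → ℂ) : Idx ν → Fin 2 → ℂ :=
  fun p k => if p.2 = 0 then 0 else
    Complex.I * ((((if k = 0 then -(p.2 1) else p.2 0 : ℤ) : ℝ) / (znorm p.2) ^ 2 : ℝ) : ℂ) * v p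

/-- The reference annulus `Ω := {1 ≤ |ω| ≤ 2}`. -/
def OmegaSet (ν : ℕ) : Set (Fin ν → ℝ) := {ω | 1 ≤ rnorm ω ∧ rnorm ω ≤ 2}

/-- Diophantine vectors `DC(γ,τ)`. -/
def DCset (ν : ℕ) (γ τ : ℝ) : Set (Fin ν → ℝ) :=
  {ω ∈ OmegaSet ν | ∀ ℓ : Zn ν, ℓ ≠ 0 → γ * bwt ℓ ^ (-τ) ≤ |ωdot ω ℓ|}

/-- The set `Ω_γ` of first order Melnikov non-resonance conditions. -/
def MelnikovSet {ν : ℕ} (jb : Fin ν → Z2) (β lam γ τ : ℝ) : Set (Fin ν → ℝ) :=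
  {ω ∈ DCset ν γ τ | ∀ (ℓ : Zn ν) (j : Z2), (ℓ, j) ≠ (0, 0) → piT jb ℓ + j = 0 →
    lam * γ * bwt ℓ ^ (-τ) ≤ |lam * ωdot ω ℓ + β * Lfreq j|}

/-- Matrix representation `R̂(ℓ)_j^{j'}` of (φ-dependent families of) linear operators. -/
abbrev OpMat (ν : ℕ) := Zn ν → Z2 → Z2 → ℂ

/-- The decay norm `|R|_{m,s}`. -/
noncomputable def decayNorm {ν : ℕ} (m s : ℝ) (R : OpMat ν) : ℝ≥0∞ :=
  ⨆ j' : Z2, ENNReal.ofReal (bwt j' ^ (-m)) *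
    (∑' q : Idx ν, ENNReal.ofReal (wt (q.1, q.2 - j') ^ (2 * s)) *
      ((‖R q.1 q.2 j'‖₊ : ℝ≥0∞)) ^ 2) ^ (1/2 : ℝ)

/-- The weighted decay norm `|R|_{m,s}^{Lip(γ)}` of a family `R(ω)`, `ω ∈ Λ`. -/
noncomputable def decayNormLip {ν : ℕ} (γ : ℝ) (Λ : Set (Fin ν → ℝ)) (m s : ℝ)
    (R : (Fin ν → ℝ) → OpMat ν) : ℝ≥0∞ :=
  (⨆ ω ∈ Λ, decayNorm m s (R ω)) +
    ENNReal.ofReal γ * ⨆ ω₁ ∈ Λ, ⨆ ω₂ ∈ Λ,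
      decayNorm m (s - 1) (fun ℓ j j' => R ω₁ ℓ j j' - R ω₂ ℓ j j') /
        ENNReal.ofReal (rnorm (ω₁ - ω₂))

/-- Composition of operators at the level of matrices. -/
noncomputable def opComp {ν : ℕ} (R Q : OpMat ν) : OpMat ν :=
  fun ℓ j j' => ∑' q : Idx ν, R (ℓ - q.1) j q.2 * Q q.1 q.2 j'

/-- Action of an operator (given by its matrix) on Fourier coefficients. -/
noncomputable def opApply {ν : ℕ} (R : OpMat ν) (u : Idx ν → ℂ) : Idx ν → ℂ :=
  fun p => ∑' q : Idx ν, R (p.1 - q.1) p.2 q.2 * u q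

/-- Matrix of the identity operator. -/
noncomputable def idMat (ν : ℕ) : OpMat ν := fun ℓ j j' => if ℓ = 0 ∧ j = j' then 1 else 0

/-- Momentum preserving operator, in matrix form. -/
def MomPresMat {ν : ℕ} (jb : Fin ν → Z2) (R : OpMat ν) : Prop :=
  ∀ ℓ j j', R ℓ j j' ≠ 0 → piT jb ℓ + j = j'

/-- `n`-fold composition `R^n`. -/
noncomputable def opPow {ν : ℕ} (R : OpMat ν) : ℕ → OpMat ν
  | 0 => idMat ν
  | n + 1 => opComp R (opPow R n)

/-- Exponential `exp(R) = Id + ∑_{n ≥ 1} R^n / n!`. -/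
noncomputable def expMat {ν : ℕ} (R : OpMat ν) : OpMat ν :=
  fun ℓ j j' => idMat ν ℓ j j' +
    ∑' n : ℕ, ((Nat.factorial (n + 1) : ℂ))⁻¹ * opPow R (n + 1) ℓ j j'


/-!
A frequency `ω ∈ DC(γ,τ)` violating the Melnikov condition at `(ℓ, j)` has `ℓ ≠ 0` and
`j = -π^⊤(ℓ)`, so it lies in the strip `|ω·ℓ + β 𝙻(j)/λ| ≤ γ⟨ℓ⟩^{-τ}` within the cube
`[-2,2]^ν ⊇ Ω`. Integrating out a coordinate `i` with `ℓᵢ ≠ 0`, hence `|ℓᵢ| ≥ 1`, bounds the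
measure of that strip by `2·4^ν·γ⟨ℓ⟩^{-τ}` whatever the shift `β 𝙻(j)/λ` is. Finally
`∑_ℓ ⟨ℓ⟩^{-τ} < ∞` for `τ > ν`, by comparison with the product `∏ᵢ max(1,|ℓᵢ|)^{-τ/ν}`.
-/

open Finset

theorem volume_eq_lintegral_volume_insertNth {n : ℕ} (i : Fin (n + 1))
    {S : Set (Fin (n + 1) → ℝ)} (hS : MeasurableSet S) :
    volume S = ∫⁻ y : Fin n → ℝ, volume {x : ℝ | i.insertNth x y ∈ S} := by
  have he := (volume_preserving_piFinSuccAbove (fun _ : Fin (n + 1) => ℝ) i).symm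
  rw [← he.measure_preimage hS.nullMeasurableSet, Measure.volume_eq_prod,
    Measure.prod_apply_symm (hS.preimage (MeasurableEquiv.measurable _))]
  rfl

theorem volume_strip_inter_cube_le {n : ℕ} (i : Fin (n + 1)) (a : Fin (n + 1) → ℝ)
    (hai : a i ≠ 0) (c ε R : ℝ) :
    volume {ω : Fin (n + 1) → ℝ | (∀ k, |ω k| ≤ R) ∧ |∑ k, ω k * a k + c| ≤ ε}
      ≤ ENNReal.ofReal (2 * (ε / |a i|)) * ENNReal.ofReal (2 * R) ^ n := by
  set S := {ω : Fin (n + 1) → ℝ | (∀ k, |ω k| ≤ R) ∧ |∑ k, ω k * a k + c| ≤ ε}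
  have hS : MeasurableSet S := by
    simp only [S, Set.ofPred_and, Set.ofPred_forall]
    refine MeasurableSet.inter ?_ (measurableSet_le ?_ measurable_const)
    · exact MeasurableSet.iInter fun k => measurableSet_le (by fun_prop) measurable_const
    · fun_prop
  set cube : Set (Fin n → ℝ) := Set.univ.pi fun _ => Set.Icc (-R) R
  have hslice : ∀ y, volume {x : ℝ | i.insertNth x y ∈ S}
      ≤ cube.indicator (fun _ => ENNReal.ofReal (2 * (ε / |a i|))) y := by
    intro y
    by_cases hy : y ∈ cube
    · set D := ∑ k, y k * a (i.succAbove k) + c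
      rw [Set.indicator_of_mem hy, ← Real.volume_closedBall (-(D / a i))]
      refine measure_mono fun x hx => ?_
      have h := hx.2
      rw [Fin.sum_univ_succAbove _ i] at h
      simp only [Fin.insertNth_apply_same, Fin.insertNth_apply_succAbove] at h
      rw [Metric.mem_closedBall, Real.dist_eq, le_div_iff₀ (abs_pos.2 hai), ← abs_mul]
      have hlin : (x - -(D / a i)) * a i = x * a i + D := by
        field_simp
        ring
      rwa [hlin, ← add_assoc]
    · rw [Set.indicator_of_notMem hy, nonpos_iff_eq_zero, measure_eq_zero_iff_ae_notMem]
      refine Filter.Eventually.of_forall fun x hx => hy fun k _ => abs_le.1 ?_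
      simpa using hx.1 (i.succAbove k)
  calc volume S = ∫⁻ y, volume {x : ℝ | i.insertNth x y ∈ S} :=
        volume_eq_lintegral_volume_insertNth i hS
    _ ≤ ∫⁻ y, cube.indicator (fun _ => ENNReal.ofReal (2 * (ε / |a i|))) y :=
        lintegral_mono hslice
    _ = ENNReal.ofReal (2 * (ε / |a i|)) * ENNReal.ofReal (2 * R) ^ n := by
      rw [lintegral_indicator_const (MeasurableSet.univ_pi fun _ => measurableSet_Icc),
        volume_pi_pi]
      simp [Real.volume_Icc, two_mul]

theorem abs_le_rnorm {n : ℕ} (ω : Fin n → ℝ) (k : Fin n) : |ω k| ≤ rnorm ω :=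
  Real.abs_le_sqrt (single_le_sum (fun j _ => sq_nonneg (ω j)) (mem_univ k))

theorem abs_le_znorm {n : ℕ} (ℓ : Fin n → ℤ) (k : Fin n) : |(ℓ k : ℝ)| ≤ znorm ℓ :=
  Real.abs_le_sqrt (single_le_sum (fun j _ => sq_nonneg (ℓ j : ℝ)) (mem_univ k))

theorem one_le_bwt {n : ℕ} (ℓ : Fin n → ℤ) : 1 ≤ bwt ℓ := le_max_left _ _

theorem bwt_pos {n : ℕ} (ℓ : Fin n → ℤ) : 0 < bwt ℓ := zero_lt_one.trans_le (one_le_bwt ℓ)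

theorem bwt_rpow_neg_le_prod {n : ℕ} (ℓ : Fin n → ℤ) {s τ : ℝ} (hs : 0 ≤ s) (hτ : n * s ≤ τ) :
    bwt ℓ ^ (-τ) ≤ ∏ i, max 1 |(ℓ i : ℝ)| ^ (-s) :=
  calc bwt ℓ ^ (-τ) ≤ bwt ℓ ^ (-(n * s)) :=
        Real.rpow_le_rpow_of_exponent_le (one_le_bwt ℓ) (neg_le_neg hτ)
    _ = ∏ _i : Fin n, bwt ℓ ^ (-s) := by
        rw [prod_const, card_univ, Fintype.card_fin, ← Real.rpow_natCast,
          ← Real.rpow_mul (bwt_pos ℓ).le]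
        ring_nf
    _ ≤ ∏ i, max 1 |(ℓ i : ℝ)| ^ (-s) := by
        refine prod_le_prod (fun _ _ => Real.rpow_nonneg (bwt_pos ℓ).le _) fun i _ => ?_
        exact Real.rpow_le_rpow_of_nonpos (zero_lt_one.trans_le (le_max_left _ _))
          (max_le_max le_rfl (abs_le_znorm ℓ i)) (neg_nonpos.2 hs)

theorem summable_max_one_abs_int_rpow_neg {s : ℝ} (hs : 1 < s) :
    Summable fun m : ℤ => max 1 |(m : ℝ)| ^ (-s) := by
  refine (Real.summable_abs_int_rpow hs).congr_cofinite ?_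
  filter_upwards [(Set.finite_singleton (0 : ℤ)).compl_mem_cofinite] with m hm
  rw [max_eq_right (by exact_mod_cast Int.one_le_abs hm), Real.rpow_neg (abs_nonneg _)]

theorem summable_pi_prod {α : Type*} {f : α → ℝ} (hf0 : 0 ≤ f) (hf : Summable f) :
    ∀ n : ℕ, Summable fun x : Fin n → α => ∏ i, f (x i)
  | 0 => Summable.of_finite
  | n + 1 => by
    rw [← (Fin.consEquiv fun _ => α).summable_iff]
    simpa [Function.comp_def, Fin.prod_univ_succ] using
      hf.mul_of_nonneg (summable_pi_prod hf0 hf n) hf0 fun x => prod_nonneg fun i _ => hf0 _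

theorem summable_bwt_rpow_neg {n : ℕ} {τ : ℝ} (hτ : n < τ) :
    Summable fun ℓ : Fin n → ℤ => bwt ℓ ^ (-τ) := by
  obtain ⟨s, hs, hsτ⟩ : ∃ s : ℝ, 1 < s ∧ n * s ≤ τ := by
    rcases n.eq_zero_or_pos with rfl | hn
    · exact ⟨2, by norm_num, by simpa using hτ.le⟩
    · refine ⟨τ / n, (one_lt_div (by positivity)).2 hτ, ?_⟩
      rw [mul_div_cancel₀ _ (by positivity)]
  refine Summable.of_nonneg_of_le (fun ℓ => Real.rpow_nonneg (bwt_pos ℓ).le _)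
    (fun ℓ => bwt_rpow_neg_le_prod ℓ (by linarith) hsτ)
    (summable_pi_prod (fun m => by positivity) (summable_max_one_abs_int_rpow_neg hs) n)

theorem piT_zero {ν : ℕ} (jb : Fin ν → Z2) : piT jb 0 = 0 := by
  funext k
  simp [piT]

def resonantStrip {ν : ℕ} (ℓ : Zn ν) (c ε : ℝ) : Set (Fin ν → ℝ) :=
  {ω | (∀ k, |ω k| ≤ 2) ∧ |ωdot ω ℓ + c| ≤ ε}

theorem volume_resonantStrip_le {ν : ℕ} {ℓ : Zn ν} (hℓ : ℓ ≠ 0) (c : ℝ) {ε : ℝ} (hε : 0 ≤ ε) :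
    volume (resonantStrip ℓ c ε) ≤ ENNReal.ofReal (2 * 4 ^ ν * ε) := by
  cases ν with
  | zero => exact absurd (Subsingleton.elim ℓ 0) hℓ
  | succ n =>
    obtain ⟨i, hi⟩ := Function.ne_iff.1 hℓ
    have hℓi : 1 ≤ |(ℓ i : ℝ)| := by exact_mod_cast Int.one_le_abs hi
    calc volume (resonantStrip ℓ c ε)
        ≤ ENNReal.ofReal (2 * (ε / |(ℓ i : ℝ)|)) * ENNReal.ofReal (2 * 2) ^ n :=
          volume_strip_inter_cube_le i (fun k => (ℓ k : ℝ)) (by exact_mod_cast hi) c ε 2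
      _ = ENNReal.ofReal (2 * (ε / |(ℓ i : ℝ)|) * 4 ^ n) := by
          rw [← ENNReal.ofReal_pow (by norm_num), ← ENNReal.ofReal_mul (by positivity)]
          norm_num
      _ ≤ ENNReal.ofReal (2 * 4 ^ (n + 1) * ε) := by
          refine ENNReal.ofReal_le_ofReal ?_
          have : ε / |(ℓ i : ℝ)| ≤ ε := div_le_self hε hℓi
          rw [pow_succ]
          nlinarith [pow_pos (by norm_num : (0 : ℝ) < 4) n]

theorem diff_melnikovSet_subset {ν : ℕ} (jb : Fin ν → Z2) {β lam γ τ : ℝ} (hlam : 0 < lam) :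
    DCset ν γ τ \ MelnikovSet jb β lam γ τ ⊆ ⋃ ℓ ∈ ({0}ᶜ : Set (Zn ν)),
      resonantStrip ℓ (β * Lfreq (-piT jb ℓ) / lam) (γ * bwt ℓ ^ (-τ)) := by
  rintro ω ⟨hDC, hM⟩
  obtain ⟨ℓ, j, hne, hmom, hlt⟩ : ∃ (ℓ : Zn ν) (j : Z2), (ℓ, j) ≠ (0, 0) ∧ piT jb ℓ + j = 0 ∧
      |lam * ωdot ω ℓ + β * Lfreq j| < lam * γ * bwt ℓ ^ (-τ) := by
    by_contra! h
    exact hM ⟨hDC, h⟩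
  have hj : j = -piT jb ℓ := eq_neg_of_add_eq_zero_right hmom
  have hℓ : ℓ ≠ 0 := by
    rintro rfl
    exact hne (by simp [hj, piT_zero])
  refine Set.mem_biUnion (x := ℓ) hℓ ⟨fun k => (abs_le_rnorm ω k).trans hDC.1.2, ?_⟩
  have hscale : lam * ωdot ω ℓ + β * Lfreq j = lam * (ωdot ω ℓ + β * Lfreq j / lam) := by
    field_simp
  rw [hscale, abs_mul, abs_of_pos hlam, mul_assoc] at hlt
  rw [← hj]
  exact (lt_of_mul_lt_mul_left hlt hlam.le).le

theorem melnikov_measure_estimate_general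
    {ν : ℕ} (jb : Fin ν → Z2)
    (τ : ℝ) (hτ : (ν : ℝ) + 1 < τ) :
    ∃ C : ℝ, 0 < C ∧
      ∀ γ β lam : ℝ, 0 < γ → γ < 1 → 1 ≤ lam →
        MeasureTheory.volume (DCset ν γ τ \ MelnikovSet jb β lam γ τ)
          ≤ ENNReal.ofReal (C * γ) := by
  have hsum : Summable fun ℓ : Zn ν => bwt ℓ ^ (-τ) := summable_bwt_rpow_neg (by linarith)
  have hpos : 0 < ∑' ℓ : Zn ν, bwt ℓ ^ (-τ) := hsum.tsum_pos
    (fun ℓ => Real.rpow_nonneg (bwt_pos ℓ).le _) 0 (Real.rpow_pos_of_pos (bwt_pos 0) _)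
  refine ⟨2 * 4 ^ ν * ∑' ℓ : Zn ν, bwt ℓ ^ (-τ), by positivity, fun γ β lam hγ _ hlam => ?_⟩
  calc volume (DCset ν γ τ \ MelnikovSet jb β lam γ τ)
      ≤ volume (⋃ ℓ ∈ ({0}ᶜ : Set (Zn ν)),
          resonantStrip ℓ (β * Lfreq (-piT jb ℓ) / lam) (γ * bwt ℓ ^ (-τ))) :=
        measure_mono (diff_melnikovSet_subset jb (by linarith))
    _ ≤ ∑' ℓ : ({0}ᶜ : Set (Zn ν)),
          volume (resonantStrip ℓ.1 (β * Lfreq (-piT jb ℓ.1) / lam) (γ * bwt ℓ.1 ^ (-τ))) :=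
        measure_biUnion_le _ (Set.to_countable _) _
    _ ≤ ∑' ℓ : ({0}ᶜ : Set (Zn ν)), ENNReal.ofReal (2 * 4 ^ ν * γ * bwt ℓ.1 ^ (-τ)) :=
        ENNReal.tsum_le_tsum fun ℓ => (volume_resonantStrip_le ℓ.2 _
          (mul_nonneg hγ.le (Real.rpow_nonneg (bwt_pos _).le _))).trans_eq (by ring_nf)
    _ ≤ ∑' ℓ : Zn ν, ENNReal.ofReal (2 * 4 ^ ν * γ * bwt ℓ ^ (-τ)) :=
        ENNReal.tsum_comp_le_tsum_of_injective Subtype.val_injective _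
    _ = ENNReal.ofReal (2 * 4 ^ ν * (∑' ℓ : Zn ν, bwt ℓ ^ (-τ)) * γ) := by
        rw [← ENNReal.ofReal_tsum_of_nonneg
          (fun ℓ => mul_nonneg (by positivity) (Real.rpow_nonneg (bwt_pos ℓ).le _))
          (hsum.mul_left _), tsum_mul_left]
        ring_nf

/-- measure estimate of Lemma 3.3: `|DC(γ,τ) ∖ Ω_γ| ≤ C γ`, with a
constant `C` depending only on `ν`, `τ` and the wave vectors `j̄₁,…,j̄_ν` (in particular,
independent of `γ`, `λ` and `β`). -/
theorem melnikov_measure_estimate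
    {ν : ℕ} (hν : 2 ≤ ν) (jb : Fin ν → Z2) (hjb : SpanningWaveVectors jb)
    (τ : ℝ) (hτ : (ν : ℝ) + 1 < τ) :
    ∃ C : ℝ, 0 < C ∧
      ∀ γ β lam : ℝ, 0 < γ → γ < 1 → 1 ≤ lam →
        MeasureTheory.volume (DCset ν γ τ \ MelnikovSet jb β lam γ τ)
          ≤ ENNReal.ofReal (C * γ) :=
  melnikov_measure_estimate_general jb τ hτ

end BetaPlane
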